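/- Let k ≥ 2 be an even integer, n ≥ 3k an integer, and let S be a maximum independent set of P(n,k). If a 2k-segment I_t satisfies |I_t ∩ S| = 2k, then for every j with 1 ≤ j ≤ 2k the segment I_{t+j} satisfies |I_{t+j} ∩ S| ≤ 2k−1 (indices modulo n). -/

import Mathlib

namespace GP

/-- Adjacency generating relation for the generalized Petersen graph `P(n,k)`:
`Sum.inl i` is the outer vertex `u_i`, `Sum.inr i` is the inner vertex `v_i`. -/
def adjFun (n k : ℕ) : (ZMod n ⊕ ZMod n) → (ZMod n ⊕ ZMod n) → Prop
  | Sum.inl i, Sum.inl j => j = i + 1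
  | Sum.inl i, Sum.inr j => j = i
  | Sum.inr i, Sum.inr j => j = i + (k : ZMod n)
  | _, _ => False

/-- The generalized Petersen graph `P(n,k)`. -/
def P (n k : ℕ) : SimpleGraph (ZMod n ⊕ ZMod n) :=
  SimpleGraph.fromRel (adjFun n k)

/-- `s` is an independent set of vertices in `G`. -/
def IsIndep {V : Type*} (G : SimpleGraph V) (s : Finset V) : Prop :=
  ∀ v ∈ s, ∀ w ∈ s, ¬ G.Adj v w

/-- The independence number of a graph. -/
noncomputable def indepNum {V : Type*} (G : SimpleGraph V) : ℕ :=
  sSup {m | ∃ s : Finset V, IsIndep G s ∧ s.card = m}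

/-- `α(P(n,k))`. -/
noncomputable def alpha (n k : ℕ) : ℕ := indepNum (P n k)

/-- The outer vertex `u_i`. -/
def u (n : ℕ) (i : ZMod n) : ZMod n ⊕ ZMod n := Sum.inl i

/-- The inner vertex `v_i`. -/
def v (n : ℕ) (i : ZMod n) : ZMod n ⊕ ZMod n := Sum.inr i

/-- The `2k`-segment `I_t = {u_t, …, u_{t+2k-1}} ∪ {v_t, …, v_{t+2k-1}}`. -/
def segment (n k : ℕ) (t : ZMod n) : Finset (ZMod n ⊕ ZMod n) :=
  ((Finset.range (2*k)).image fun j : ℕ => u n (t + (j : ZMod n))) ∪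
  ((Finset.range (2*k)).image fun j : ℕ => v n (t + (j : ZMod n)))

/-!
Write `b i` for `u_{t+i} ∈ S` and `c i` for `v_{t+i} ∈ S`. Independence forbids `b i ∧ b (i+1)`,
`b i ∧ c i` and `c i ∧ c (i+k)`. If `|I_t ∩ S| = 2k`, every column `i < 2k` is occupied, so every
pair `{i, i+k}` with `i < k` contains an outer vertex of `S`; as no two outer vertices are
consecutive, these `k` pairs force, for even `k`, the rigid pattern `b i ↔ (i < k ↔ Even i)`.
Two full segments at distance `1 ≤ j ≤ 2k` carry incompatible patterns: they disagree on column
`t+j`, or they put into `S` one of the edges `u_{t+2k-1}u_{t+2k}`, `u_{t+k}v_{t+k}`,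
`v_{t+k}v_{t+2k}`.
-/

section Ladder

variable {k : ℕ} {b c : ℕ → Prop}

theorem pattern_of_cover (hk : Even k) (hbb : ∀ i, ¬(b i ∧ b (i + 1)))
    (hcover : ∀ i < k, b i ∨ b (i + k)) :
    ∀ i < 2 * k, (b i ↔ (i < k ↔ Even i)) := by
  obtain ⟨r, rfl⟩ := hk
  rcases Nat.eq_zero_or_pos r with rfl | hr
  · simp
  have hstep : ∀ i, i + 1 < r + r → (b (i + 1) ↔ ¬b i) ∧ (b (i + (r + r)) ↔ ¬b i) := by
    intro i hi
    -- of `i, i+1, i+k, i+k+1` exactly two are in `b`: one per pair `{i, i+k}`, `{i+1, i+1+k}`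
    have := hcover (i + 1) hi
    rw [show i + 1 + (r + r) = i + (r + r) + 1 by omega] at this
    have := hcover i (by omega); have := hbb i; have := hbb (i + (r + r))
    tauto
  have halt : ∀ i < r + r, (b i ↔ (b 0 ↔ Even i)) := by
    intro i hi
    induction i with
    | zero => simp
    | succ i ih => rw [(hstep i hi).1, ih (by omega), Nat.even_add_one]; tauto
  have hb0 : b 0 := by
    by_contra h0
    have hlast : b (r + r - 1) :=
      (halt _ (by omega)).2 (iff_of_false h0 (by rw [Nat.even_iff]; omega))
    have hmid : b (r + r) := by simpa using (hstep 0 (by omega)).2.2 h0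
    exact hbb _ ⟨hlast, by rwa [Nat.sub_add_cancel (by omega)]⟩
  have hlow : ∀ i < r + r, (b i ↔ Even i) := fun i hi => by simpa [hb0] using halt i hi
  intro i hi
  by_cases hik : i < r + r
  · simpa [hik] using hlow i hik
  obtain ⟨m, rfl⟩ : ∃ m, i = m + (r + r) := ⟨i - (r + r), by omega⟩
  simp only [hik, false_iff, Nat.even_add, Even.add_self, iff_true]
  rcases (show m + 1 < r + r ∨ m + 1 = r + r by omega) with hm | hm
  · rw [(hstep m hm).2, hlow m (by omega)]
  · have hodd : ¬Even m := by rw [Nat.even_iff]; omega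
    have := hcover m (by omega)
    rw [hlow m (by omega)] at this
    tauto

theorem pattern_of_full_window (hk : Even k) (hbb : ∀ i, ¬(b i ∧ b (i + 1)))
    (hbc : ∀ i, ¬(b i ∧ c i)) (hcc : ∀ i, ¬(c i ∧ c (i + k))) {s : ℕ}
    (hfull : ∀ i < 2 * k, b (s + i) ∨ c (s + i)) :
    ∀ i < 2 * k, (b (s + i) ↔ (i < k ↔ Even i)) ∧ (c (s + i) ↔ ¬(i < k ↔ Even i)) := by
  have hcover : ∀ i < k, b (s + i) ∨ b (s + (i + k)) := by
    intro i hi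
    have := hfull i (by omega); have := hfull (i + k) (by omega); have := hcc (s + i)
    rw [add_assoc] at this
    tauto
  intro i hi
  have hb := pattern_of_cover hk (fun i => hbb (s + i)) hcover i hi
  have := hfull i hi; have := hbc (s + i)
  exact ⟨hb, by tauto⟩

theorem false_of_full_windows (hk : Even k) (hbb : ∀ i, ¬(b i ∧ b (i + 1)))
    (hbc : ∀ i, ¬(b i ∧ c i)) (hcc : ∀ i, ¬(c i ∧ c (i + k))) {j : ℕ} (hj1 : 1 ≤ j)
    (hj2 : j ≤ 2 * k) (hfull₀ : ∀ i < 2 * k, b i ∨ c i)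
    (hfull : ∀ i < 2 * k, b (j + i) ∨ c (j + i)) : False := by
  have W₀ := pattern_of_full_window hk hbb hbc hcc (s := 0) (by simpa using hfull₀)
  have W := pattern_of_full_window hk hbb hbc hcc hfull
  simp only [zero_add] at W₀
  simp only [Nat.even_iff] at W₀ W
  have hk2 : k % 2 = 0 := Nat.even_iff.mp hk
  rcases hj2.lt_or_eq with hj2 | rfl
  · have hbj : b j := by simpa using (W 0 (by omega)).1.2 (by simp; omega)
    have hpj := (W₀ j hj2).1.1 hbj
    have hck : c k := (W₀ k (by omega)).2.2 (by omega)
    by_cases hjk : j < k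
    · refine hbc k ⟨?_, hck⟩
      have := (W (k - j) (by omega)).1.2 (by omega)
      rwa [Nat.add_sub_cancel' hjk.le] at this
    · refine hcc k ⟨hck, ?_⟩
      have := (W (2 * k - j) (by omega)).2.2 (by omega)
      rwa [show j + (2 * k - j) = k + k by omega] at this
  · refine hbb (2 * k - 1) ⟨(W₀ _ (by omega)).1.2 (by omega), ?_⟩
    have := (W 0 (by omega)).1.2 (by omega)
    rwa [show 2 * k - 1 + 1 = 2 * k + 0 by omega]

end Ladder

variable {n k : ℕ}

theorem P_adj_u_succ (hn : 1 < n) (i : ZMod n) : (P n k).Adj (u n i) (u n (i + 1)) := by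
  have : Fact (1 < n) := ⟨hn⟩
  refine (SimpleGraph.fromRel_adj _ _ _).mpr ⟨?_, Or.inl rfl⟩
  simp [u]

theorem P_adj_u_v (i : ZMod n) : (P n k).Adj (u n i) (v n i) :=
  (SimpleGraph.fromRel_adj _ _ _).mpr ⟨by simp [u, v], Or.inl rfl⟩

theorem P_adj_v_add (hk : 0 < k) (hkn : k < n) (i : ZMod n) :
    (P n k).Adj (v n i) (v n (i + k)) := by
  refine (SimpleGraph.fromRel_adj _ _ _).mpr ⟨?_, Or.inl rfl⟩
  have : (k : ZMod n) ≠ 0 := by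
    rw [Ne, ZMod.natCast_eq_zero_iff]
    exact fun h => (Nat.le_of_dvd hk h).not_gt hkn
  simpa [v] using this

theorem IsIndep.not_and_mem {V : Type*} {G : SimpleGraph V} {S : Finset V} (hS : IsIndep G S)
    {x y : V} (hxy : G.Adj x y) : ¬(x ∈ S ∧ y ∈ S) :=
  fun ⟨hx, hy⟩ => hS x hx y hy hxy

theorem IsIndep.card_segment_inter_le {S : Finset (ZMod n ⊕ ZMod n)}
    (hS : IsIndep (P n k) S) (t : ZMod n) :
    (segment n k t ∩ S).card ≤
      ((Finset.range (2 * k)).filter fun i : ℕ => u n (t + i) ∈ S ∨ v n (t + i) ∈ S).card := by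
  classical
  let occupant : ℕ → ZMod n ⊕ ZMod n := fun i =>
    if u n (t + i) ∈ S then u n (t + i) else v n (t + i)
  refine (Finset.card_le_card (t := Finset.image occupant _) ?_).trans Finset.card_image_le
  intro w hw
  simp only [segment, Finset.mem_inter, Finset.mem_union, Finset.mem_image, Finset.mem_range] at hw
  obtain ⟨⟨i, hi, rfl⟩ | ⟨i, hi, rfl⟩, hwS⟩ := hw
  · exact Finset.mem_image.mpr ⟨i, by simp [hi, hwS], by simp [occupant, hwS]⟩
  · have hu : u n (t + i) ∉ S := fun hu => hS.not_and_mem (P_adj_u_v _) ⟨hu, hwS⟩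
    exact Finset.mem_image.mpr ⟨i, by simp [hi, hwS], by simp [occupant, hu]⟩

theorem IsIndep.card_segment_inter_le_two_mul {S : Finset (ZMod n ⊕ ZMod n)}
    (hS : IsIndep (P n k) S) (t : ZMod n) : (segment n k t ∩ S).card ≤ 2 * k :=
  (hS.card_segment_inter_le t).trans ((Finset.card_filter_le _ _).trans (by simp))

theorem IsIndep.mem_or_mem_of_card_segment_inter {S : Finset (ZMod n ⊕ ZMod n)}
    (hS : IsIndep (P n k) S) {t : ZMod n} (ht : (segment n k t ∩ S).card = 2 * k) :
    ∀ i < 2 * k, u n (t + i) ∈ S ∨ v n (t + i) ∈ S := by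
  intro i hi
  refine (Finset.card_filter_eq_iff (p := fun i : ℕ => u n (t + i) ∈ S ∨ v n (t + i) ∈ S)).mp
    ?_ i (Finset.mem_range.mpr hi)
  have := hS.card_segment_inter_le t
  have := Finset.card_filter_le (Finset.range (2 * k))
    fun i : ℕ => u n (t + i) ∈ S ∨ v n (t + i) ∈ S
  rw [Finset.card_range] at *
  omega

theorem type1_spacing_general (n k : ℕ) (hke : Even k) (hn : 3 * k ≤ n)
    (S : Finset (ZMod n ⊕ ZMod n)) (hind : IsIndep (P n k) S)
    (t : ZMod n) (ht : (segment n k t ∩ S).card = 2 * k) :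
    ∀ j : ℕ, 1 ≤ j → j ≤ 2 * k →
      (segment n k (t + (j : ZMod n)) ∩ S).card ≤ 2 * k - 1 := by
  intro j hj1 hj2
  have hk : 0 < k := by omega
  have hle := hind.card_segment_inter_le_two_mul (t + (j : ZMod n))
  suffices hne : (segment n k (t + (j : ZMod n)) ∩ S).card ≠ 2 * k by omega
  intro hfull
  refine false_of_full_windows (b := fun i : ℕ => u n (t + i) ∈ S)
    (c := fun i : ℕ => v n (t + i) ∈ S) hke ?_ ?_ ?_ hj1 hj2
    (hind.mem_or_mem_of_card_segment_inter ht) ?_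
  · intro i
    simpa [add_assoc] using hind.not_and_mem (P_adj_u_succ (by omega) (t + (i : ZMod n)))
  · exact fun i => hind.not_and_mem (P_adj_u_v _)
  · intro i
    simpa [add_assoc] using hind.not_and_mem (P_adj_v_add hk (by omega) (t + (i : ZMod n)))
  · intro i hi
    simpa [add_assoc] using hind.mem_or_mem_of_card_segment_inter hfull i hi

/-- If `S` is a maximum independent set of `P(n,k)` (`k ≥ 2` even, `n ≥ 3k`)
and `|I_t ∩ S| = 2k`, then `|I_{t+j} ∩ S| ≤ 2k − 1` for every `1 ≤ j ≤ 2k`. -/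
theorem type1_spacing (n k : ℕ) (hke : Even k) (hk : 2 ≤ k) (hn : 3 * k ≤ n)
    (S : Finset (ZMod n ⊕ ZMod n)) (hind : IsIndep (P n k) S) (hmax : S.card = alpha n k)
    (t : ZMod n) (ht : (segment n k t ∩ S).card = 2 * k) :
    ∀ j : ℕ, 1 ≤ j → j ≤ 2 * k →
      (segment n k (t + (j : ZMod n)) ∩ S).card ≤ 2 * k - 1 :=
  type1_spacing_general n k hke hn S hind t ht

end GP
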